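/- arXiv:math/0410175 — 2 statements merged into one kernel-verified Lean document; each statement's English description precedes it below -/
import Mathlib

section
/- The sequence of Beta(n,n) distributions on [0,1] satisfies, with speed u_n = 1/n, the large deviation principle with good rate function Î(x) = −ln(x − x²) − ln 4 for x ∈ (0,1) and Î(x) = +∞ for x ∈ {0,1}. -/
open MeasureTheory Filter Topology Matrix ProbabilityTheory
open scoped ENNReal NNReal Classical

noncomputable section

/-- The unit interval `[0,1]` as a subtype of `ℝ`. -/
abbrev I01 : Type := (Set.Icc (0:ℝ) 1)

/-- `c_k(μ)`, the `k`-th power moment of a probability measure on `[0,1]`. -/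
def momentP (μ : ProbabilityMeasure I01) (k : ℕ) : ℝ := ∫ x, (x : ℝ) ^ k ∂(μ : Measure I01)

/-- `c^{(n)}(μ) = (c_1(μ),…,c_n(μ))`, the vector of the first `n` moments. -/
def momVec (n : ℕ) (μ : ProbabilityMeasure I01) : Fin n → ℝ := fun i => momentP μ ((i : ℕ) + 1)

/-- The `n`-th moment space `M_n ⊆ ℝ^n`. -/
def Mset (n : ℕ) : Set (Fin n → ℝ) := Set.range (momVec n)

/-- `P_n`, the uniform (normalized Lebesgue) probability on `M_n`. -/
def Pn (n : ℕ) : Measure (Fin n → ℝ) := (volume (Mset n))⁻¹ • volume.restrict (Mset n)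

/-- `c^+(c) = max {t : (c,t) ∈ M_{k+1}}`. -/
def cplus {k : ℕ} (c : Fin k → ℝ) : ℝ := sSup {t : ℝ | Fin.snoc c t ∈ Mset (k + 1)}

/-- `c^-(c) = min {t : (c,t) ∈ M_{k+1}}`. -/
def cminus {k : ℕ} (c : Fin k → ℝ) : ℝ := sInf {t : ℝ | Fin.snoc c t ∈ Mset (k + 1)}

/-- The arcsine law `ν(dx) = dx / (π √(x(1-x)))` on `[0,1]`. -/
def arcsine : Measure I01 :=
  volume.withDensity fun x => ENNReal.ofReal (1 / (Real.pi * Real.sqrt ((x:ℝ) * (1 - (x:ℝ)))))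

/-- `σ_n^+(d)`: the unique probability measure with first `n` moments `d` and maximal
`(n+1)`-th moment (junk value if `d ∉ M_n`). -/
def sigmaPlus (n : ℕ) (d : Fin n → ℝ) : ProbabilityMeasure I01 :=
  if h : ∃ μ : ProbabilityMeasure I01, momVec n μ = d ∧ momentP μ (n + 1) = cplus d then h.choose
  else ⟨Measure.dirac ⟨0, Set.left_mem_Icc.mpr zero_le_one⟩, inferInstance⟩

/-- Kullback information `K(P,Q) = ∫ log (dP/dQ) dP` if `P ≪ Q` and `log dP/dQ ∈ L¹(P)`,
`+∞` otherwise (valued in `[0,∞]`; for probability measures the integral is nonnegative). -/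
def kullback (P Q : Measure I01) : ℝ≥0∞ :=
  if P ≪ Q ∧ Integrable (llr P Q) P then ENNReal.ofReal (∫ x, llr P Q x ∂P) else ⊤

/-- A sequence of (outer) measures `R n` satisfies the LDP with speed `u` and rate `I`. -/
def IsLDP {U : Type*} [TopologicalSpace U] (R : ℕ → Set U → ℝ≥0∞) (u : ℕ → ℝ) (I : U → EReal) :
    Prop :=
  LowerSemicontinuous I ∧
  ∀ A : Set U,
    -(⨅ x ∈ interior A, I x) ≤ liminf (fun n => ((u n : ℝ) : EReal) * ENNReal.log (R n A)) atTop ∧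
    limsup (fun n => ((u n : ℝ) : EReal) * ENNReal.log (R n A)) atTop ≤ -(⨅ x ∈ closure A, I x)

/-- Goodness of a rate function: all sublevel sets are compact. -/
def GoodRate {U : Type*} [TopologicalSpace U] (I : U → EReal) : Prop :=
  ∀ a : ℝ, IsCompact {x : U | I x ≤ (a : EReal)}

/-- Convexity of a rate function on `P([0,1])`, via convex combinations of measures. -/
def ConvexRateProb (I : ProbabilityMeasure I01 → EReal) : Prop :=
  ∀ (μ μ₁ μ₂ : ProbabilityMeasure I01) (a b : ℝ), 0 ≤ a → 0 ≤ b → a + b = 1 →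
    (μ : Measure I01) = ENNReal.ofReal a • (μ₁ : Measure I01) + ENNReal.ofReal b • (μ₂ : Measure I01) →
    I μ ≤ (a : EReal) * I μ₁ + (b : EReal) * I μ₂

/-- Projection keeping the first `k` coordinates (junk `0` where undefined). -/
def projk (k n : ℕ) (c : Fin n → ℝ) : Fin k → ℝ :=
  fun i => if h : (i : ℕ) < n then c ⟨i, h⟩ else 0

/-- `c̄^{(k)}`: the vector of the first `k` moments of the arcsine law. -/
def cbar (k : ℕ) : Fin k → ℝ := fun i => ∫ x, (x : ℝ) ^ ((i : ℕ) + 1) ∂arcsine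

/-- The lower-triangular matrix `A_k` with entries `a_{ij} = 2^{-2i+1} C(2i, i-j)`
(`1`-based indices). -/
def Amat (k : ℕ) : Matrix (Fin k) (Fin k) ℝ :=
  fun i j => if (j : ℕ) ≤ (i : ℕ) then
    (2 : ℝ) ^ (-(2 * (i : ℕ) + 1) : ℤ) * (Nat.choose (2 * ((i : ℕ) + 1)) ((i : ℕ) - (j : ℕ)))
  else 0

/-- `Σ_k = (1/2) A_k A_kᵀ`. -/
def Sigmak (k : ℕ) : Matrix (Fin k) (Fin k) ℝ := (1 / 2 : ℝ) • (Amat k * (Amat k)ᵀ)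

/-- `J_k(x) = (1/2) xᵀ Σ_k⁻¹ x`. -/
def Jk (k : ℕ) (x : Fin k → ℝ) : ℝ := (1 / 2 : ℝ) * (x ⬝ᵥ ((Sigmak k)⁻¹ *ᵥ x))

/-- Unnormalized beta density `x^{a-1}(1-x)^{b-1}` (natural parameters). -/
def betaDen (a b : ℕ) (x : I01) : ℝ≥0∞ :=
  ENNReal.ofReal ((x : ℝ) ^ (a - 1) * (1 - (x : ℝ)) ^ (b - 1))

/-- The beta distribution `β(a,b)` on `[0,1]` with natural parameters. -/
def betaM (a b : ℕ) : Measure I01 :=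
  (∫⁻ x, betaDen a b x ∂volume)⁻¹ • volume.withDensity (betaDen a b)

/-- `ln : ℝ → [-∞,∞]` with the convention `ln t = -∞` for `t ≤ 0`. -/
def elog (x : ℝ) : EReal := if x ≤ 0 then ⊥ else ((Real.log x : ℝ) : EReal)

/-- `exp(-x)` for `x ∈ [0,∞]`, with `exp(-∞) = 0`. -/
def expNeg (x : ℝ≥0∞) : ℝ := if x = ⊤ then 0 else Real.exp (-(x.toReal))

/-- `exp : [-∞,∞] → [0,∞]`. -/
def expE (x : EReal) : ℝ≥0∞ :=
  if x = ⊥ then 0 else if x = ⊤ then ⊤ else ENNReal.ofReal (Real.exp x.toReal)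

/-- The first `m` coordinates of `c : Fin n → ℝ` (`m ≤ n`). -/
def truncMom {n : ℕ} (c : Fin n → ℝ) (m : ℕ) (h : m ≤ n) : Fin m → ℝ :=
  fun j => c ⟨j, lt_of_lt_of_le j.2 h⟩

/-- The vector of the first `k` canonical moments of `c` (junk outside `int M_n`). -/
def canMomVec (k : ℕ) {n : ℕ} (c : Fin n → ℝ) : Fin k → ℝ := fun i =>
  if h : (i : ℕ) < n then
    (c ⟨i, h⟩ - cminus (truncMom c i h.le)) /
      (cplus (truncMom c i h.le) - cminus (truncMom c i h.le))
  else 0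

/-- `F(μ) = ∫ f₀ dμ`. -/
def F0int (f0 : C(I01, ℝ)) (μ : ProbabilityMeasure I01) : ℝ := ∫ x, f0 x ∂(μ : Measure I01)

/-- The tilted law `Q̃_n(B) = E[exp(nF(μ_n)) 1_B(μ_n)] / E[exp(nF(μ_n))]`, as a set function. -/
def Qtil (f0 : C(I01, ℝ)) (n : ℕ) (B : Set (ProbabilityMeasure I01)) : ℝ≥0∞ :=
  (∫⁻ c, ENNReal.ofReal (Real.exp (n * F0int f0 (sigmaPlus n c))) ∂(Pn n))⁻¹ *
    ∫⁻ c in sigmaPlus n ⁻¹' B, ENNReal.ofReal (Real.exp (n * F0int f0 (sigmaPlus n c))) ∂(Pn n)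

/-- `∫ ln g dν` valued in `[-∞,∞)`, with the convention `ln t = -∞` on `{t ≤ 0}`. -/
def nuLogInt (g : I01 → ℝ) : EReal :=
  ((∫⁻ x, ENNReal.ofReal (Real.log (g x)) ∂arcsine : ℝ≥0∞) : EReal) -
    ((∫⁻ x, (if g x ≤ 0 then (⊤ : ℝ≥0∞) else ENNReal.ofReal (-Real.log (g x))) ∂arcsine :
      ℝ≥0∞) : EReal)

end

section Statements
open MeasureTheory Filter Topology Matrix ProbabilityTheory
open scoped ENNReal NNReal

/-- The rate function of Lemma 4.3, on `[0,1]`. -/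
noncomputable def betaRate (x : I01) : EReal :=
  if (x : ℝ) = 0 ∨ (x : ℝ) = 1 then ⊤
  else ((-Real.log ((x : ℝ) * (1 - (x : ℝ))) - Real.log 4 : ℝ) : EReal)

/-! `β(n,n)` has density proportional to `(x(1-x))^(n-1)`, and `x(1-x) ≤ 1/4` with equality only
at `1/2`, so `(1/n) log β(n,n)(A)` is governed by the largest value of `4x(1-x)` on `A`, as in
Laplace's method. From above, the mass of `A` is at most `(sup_A x(1-x))^(n-1)` divided by the
normaliser, which is at least `2δ (1/4 - δ^2)^(n-1)` for every `δ`; from below, an interior point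
`x` of `A` has a small interval around it on which `y(1-y) ≥ r` for any `r < x(1-x)`, while the
normaliser is at most `4^(-(n-1))`. Writing `Î = -elog (4x(1-x))` turns these into the two LDP
bounds; `Î` is continuous into `[-∞, ∞]`, and its sublevel sets are closed in the compact
`[0,1]`. -/

namespace BetaLDP

noncomputable def mulOneSub (x : I01) : ℝ := (x : ℝ) * (1 - (x : ℝ))

lemma mulOneSub_nonneg (x : I01) : 0 ≤ mulOneSub x := mul_nonneg x.2.1 (sub_nonneg.2 x.2.2)

lemma mulOneSub_le_quarter (x : I01) : mulOneSub x ≤ 1 / 4 := by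
  unfold mulOneSub
  nlinarith [sq_nonneg ((x : ℝ) - 1 / 2)]

lemma continuous_mulOneSub : Continuous mulOneSub := by
  unfold mulOneSub
  fun_prop

lemma elog_of_pos {t : ℝ} (ht : 0 < t) : elog t = Real.log t := if_neg ht.not_ge

lemma elog_eq_log_ofReal (t : ℝ) : elog t = ENNReal.log (ENNReal.ofReal t) := by
  rcases le_or_gt t 0 with ht | ht
  · rw [elog, if_pos ht, ENNReal.ofReal_of_nonpos ht, ENNReal.log_zero]
  · rw [elog_of_pos ht, ENNReal.log_ofReal_of_pos ht]

lemma continuous_elog : Continuous elog := by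
  simp only [funext elog_eq_log_ofReal]
  exact ENNReal.continuous_log.comp ENNReal.continuous_ofReal

lemma monotone_elog : Monotone elog := fun s t hst => by
  simp only [elog_eq_log_ofReal]
  exact ENNReal.log_monotone (ENNReal.ofReal_le_ofReal hst)

lemma elog_le_of_forall_log_le {t : ℝ} {L : EReal}
    (h : ∀ ρ, 0 < ρ → ρ < t → (Real.log ρ : EReal) ≤ L) : elog t ≤ L := by
  rcases le_or_gt t 0 with ht | ht
  · rw [elog, if_pos ht]
    exact bot_le
  refine le_of_tendsto (x := 𝓝[<] t) ((continuous_elog.tendsto t).mono_left nhdsWithin_le_nhds) ?_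
  filter_upwards [self_mem_nhdsWithin, nhdsWithin_le_nhds (eventually_gt_nhds ht)] with ρ hρt hρ
  rw [elog_of_pos hρ]
  exact h ρ hρ hρt

lemma le_elog_of_forall_le_log {t : ℝ} {L : EReal} (ht : 0 ≤ t)
    (h : ∀ ρ, t < ρ → L ≤ Real.log ρ) : L ≤ elog t := by
  refine ge_of_tendsto (x := 𝓝[>] t) ((continuous_elog.tendsto t).mono_left nhdsWithin_le_nhds) ?_
  filter_upwards [self_mem_nhdsWithin] with ρ hρ
  rw [elog_of_pos (ht.trans_lt hρ)]
  exact h ρ hρ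

lemma betaRate_eq_neg_elog (x : I01) : betaRate x = -elog (4 * mulOneSub x) := by
  by_cases hx : (x : ℝ) = 0 ∨ (x : ℝ) = 1
  · have h0 : mulOneSub x = 0 := by rcases hx with h | h <;> simp [mulOneSub, h]
    rw [betaRate, if_pos hx, h0, mul_zero, elog, if_pos le_rfl, EReal.neg_bot]
  · push Not at hx
    have hpos : 0 < mulOneSub x :=
      mul_pos (x.2.1.lt_of_ne' hx.1) (sub_pos.2 (x.2.2.lt_of_ne hx.2))
    rw [betaRate, if_neg (by tauto), elog_of_pos (by positivity), ← EReal.coe_neg,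
      Real.log_mul four_ne_zero hpos.ne', mulOneSub]
    ring_nf

lemma continuous_betaRate : Continuous betaRate :=
  (continuous_neg.comp (continuous_elog.comp (continuous_const.mul continuous_mulOneSub))).congr
    fun x => (betaRate_eq_neg_elog x).symm

lemma betaRate_le_of_mulOneSub_le {x y : I01} (h : mulOneSub y ≤ mulOneSub x) :
    betaRate x ≤ betaRate y := by
  rw [betaRate_eq_neg_elog, betaRate_eq_neg_elog, EReal.neg_le_neg_iff]
  exact monotone_elog (by linarith)

noncomputable def logRate (a : ℕ → ℝ≥0∞) (n : ℕ) : EReal :=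
  ((1 / (n : ℝ) : ℝ) : EReal) * ENNReal.log (a n)

lemma logRate_mono {a b : ℕ → ℝ≥0∞} {n : ℕ} (h : a n ≤ b n) : logRate a n ≤ logRate b n :=
  mul_le_mul_of_nonneg_left (ENNReal.log_monotone h) (EReal.coe_nonneg.2 (by positivity))

lemma tendsto_logRate_ofReal_mul_pow {C ρ : ℝ} (hC : 0 < C) (hρ : 0 < ρ) :
    Tendsto (logRate fun n => ENNReal.ofReal (C * ρ ^ (n - 1))) atTop (𝓝 (Real.log ρ)) := by
  have hreal : ∀ n, logRate (fun n => ENNReal.ofReal (C * ρ ^ (n - 1))) n =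
      ((1 / (n : ℝ) * Real.log (C * ρ ^ (n - 1)) : ℝ) : EReal) := fun n => by
    rw [logRate, ENNReal.log_ofReal_of_pos (by positivity), EReal.coe_mul]
  refine (EReal.tendsto_coe.2 ?_).congr fun n => (hreal n).symm
  have hexpand : ∀ᶠ n : ℕ in atTop, 1 / (n : ℝ) * Real.log C + (1 - 1 / (n : ℝ)) * Real.log ρ =
      1 / (n : ℝ) * Real.log (C * ρ ^ (n - 1)) := by
    filter_upwards [eventually_ge_atTop 1] with n hn
    have hn' : (0 : ℝ) < n := by exact_mod_cast hn
    rw [Real.log_mul hC.ne' (by positivity), Real.log_pow, Nat.cast_sub hn, Nat.cast_one]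
    field_simp
  refine Tendsto.congr' hexpand ?_
  have h0 := tendsto_one_div_atTop_nhds_zero_nat (𝕜 := ℝ)
  simpa using (h0.mul_const (Real.log C)).add
    (((tendsto_const_nhds (x := (1 : ℝ))).sub h0).mul_const (Real.log ρ))

lemma limsup_logRate_le {a : ℕ → ℝ≥0∞} {C ρ : ℝ} (hC : 0 < C) (hρ : 0 < ρ)
    (h : ∀ᶠ n in atTop, a n ≤ ENNReal.ofReal (C * ρ ^ (n - 1))) :
    limsup (logRate a) atTop ≤ Real.log ρ :=
  (tendsto_logRate_ofReal_mul_pow hC hρ).limsup_eq ▸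
    limsup_le_limsup (h.mono fun _ hn => logRate_mono hn)

lemma le_liminf_logRate {a : ℕ → ℝ≥0∞} {C ρ : ℝ} (hC : 0 < C) (hρ : 0 < ρ)
    (h : ∀ᶠ n in atTop, ENNReal.ofReal (C * ρ ^ (n - 1)) ≤ a n) :
    Real.log ρ ≤ liminf (logRate a) atTop :=
  (tendsto_logRate_ofReal_mul_pow hC hρ).liminf_eq ▸
    liminf_le_liminf (h.mono fun _ hn => logRate_mono hn)

noncomputable def betaNorm (n : ℕ) : ℝ≥0∞ := ∫⁻ x, betaDen n n x

lemma betaDen_self (n : ℕ) (x : I01) : betaDen n n x = ENNReal.ofReal (mulOneSub x ^ (n - 1)) := by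
  rw [betaDen, mulOneSub, mul_pow]

lemma betaM_self_apply (n : ℕ) {A : Set I01} (hA : MeasurableSet A) :
    betaM n n A = (betaNorm n)⁻¹ * ∫⁻ x in A, betaDen n n x := by
  rw [betaM, Measure.smul_apply, withDensity_apply _ hA, smul_eq_mul, betaNorm]

lemma setLIntegral_betaDen_le (n : ℕ) {K : Set I01} {s : ℝ}
    (h : ∀ x ∈ K, mulOneSub x ≤ s) :
    ∫⁻ x in K, betaDen n n x ≤ ENNReal.ofReal (s ^ (n - 1)) :=
  calc ∫⁻ x in K, betaDen n n x
      ≤ ∫⁻ _ in K, ENNReal.ofReal (s ^ (n - 1)) := setLIntegral_mono measurable_const fun x hx => by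
        rw [betaDen_self]
        exact ENNReal.ofReal_le_ofReal (pow_le_pow_left₀ (mulOneSub_nonneg x) (h x hx) _)
    _ = ENNReal.ofReal (s ^ (n - 1)) * volume K := setLIntegral_const K _
    _ ≤ ENNReal.ofReal (s ^ (n - 1)) := mul_le_of_le_one_right' prob_le_one

lemma le_setLIntegral_betaDen (n : ℕ) {a b r : ℝ} (hr : 0 ≤ r)
    (h : ∀ y ∈ Set.Icc a b, r ≤ y * (1 - y)) :
    ENNReal.ofReal ((b - a) * r ^ (n - 1)) ≤
      ∫⁻ x in Subtype.val ⁻¹' Set.Icc a b, betaDen n n x := by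
  have hsub : Set.Icc a b ⊆ Set.Icc 0 1 := fun y hy => by
    have := hr.trans (h y hy)
    constructor <;> nlinarith
  have hvol : volume (Subtype.val ⁻¹' Set.Icc a b : Set I01) = ENNReal.ofReal (b - a) := by
    rw [volume_preimage_coe nullMeasurableSet_Icc measurableSet_Icc,
      Set.inter_eq_left.2 hsub, Real.volume_Icc]
  calc ENNReal.ofReal ((b - a) * r ^ (n - 1))
      = ∫⁻ _ in Subtype.val ⁻¹' Set.Icc a b, ENNReal.ofReal (r ^ (n - 1)) := by
        rw [setLIntegral_const, hvol, ENNReal.ofReal_mul' (by positivity), mul_comm]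
    _ ≤ ∫⁻ x in Subtype.val ⁻¹' Set.Icc a b, betaDen n n x :=
        setLIntegral_mono' (measurableSet_Icc.preimage measurable_subtype_coe) fun x hx => by
          rw [betaDen_self]
          exact ENNReal.ofReal_le_ofReal (pow_le_pow_left₀ hr (h x hx) _)

lemma betaNorm_le (n : ℕ) : betaNorm n ≤ ENNReal.ofReal ((1 / 4) ^ (n - 1)) := by
  rw [betaNorm, ← setLIntegral_univ]
  exact setLIntegral_betaDen_le n fun x _ => mulOneSub_le_quarter x

lemma le_betaNorm (n : ℕ) {δ : ℝ} (hδ₀ : 0 ≤ δ) (hδ : δ ≤ 1 / 2) :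
    ENNReal.ofReal (2 * δ * (1 / 4 - δ ^ 2) ^ (n - 1)) ≤ betaNorm n := by
  calc ENNReal.ofReal (2 * δ * (1 / 4 - δ ^ 2) ^ (n - 1))
      = ENNReal.ofReal ((1 / 2 + δ - (1 / 2 - δ)) * (1 / 4 - δ ^ 2) ^ (n - 1)) := by ring_nf
    _ ≤ ∫⁻ x in Subtype.val ⁻¹' Set.Icc (1 / 2 - δ) (1 / 2 + δ), betaDen n n x :=
        le_setLIntegral_betaDen n (by nlinarith) fun y hy => by nlinarith [hy.1, hy.2]
    _ ≤ betaNorm n := setLIntegral_le_lintegral _ _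

lemma betaM_self_le (n : ℕ) {A : Set I01} {s : ℝ} (h : ∀ x ∈ A, mulOneSub x ≤ s) :
    betaM n n A ≤ (betaNorm n)⁻¹ * ENNReal.ofReal (s ^ (n - 1)) := by
  have hK : MeasurableSet {x | mulOneSub x ≤ s} :=
    measurableSet_le continuous_mulOneSub.measurable measurable_const
  calc betaM n n A ≤ betaM n n {x | mulOneSub x ≤ s} := measure_mono h
    _ ≤ _ := by
      rw [betaM_self_apply n hK]
      gcongr
      exact setLIntegral_betaDen_le n fun x hx => hx

lemma le_betaM_self (n : ℕ) {A : Set I01} {a b r : ℝ} (hr : 0 ≤ r)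
    (h : ∀ y ∈ Set.Icc a b, r ≤ y * (1 - y)) (hA : Subtype.val ⁻¹' Set.Icc a b ⊆ A) :
    (betaNorm n)⁻¹ * ENNReal.ofReal ((b - a) * r ^ (n - 1)) ≤ betaM n n A :=
  calc (betaNorm n)⁻¹ * ENNReal.ofReal ((b - a) * r ^ (n - 1))
      ≤ betaM n n (Subtype.val ⁻¹' Set.Icc a b) := by
        rw [betaM_self_apply n (measurableSet_Icc.preimage measurable_subtype_coe)]
        gcongr
        exact le_setLIntegral_betaDen n hr h
    _ ≤ betaM n n A := measure_mono hA

lemma limsup_logRate_betaM_le {A : Set I01} {s : ℝ} (hs : 0 ≤ s)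
    (h : ∀ x ∈ A, mulOneSub x ≤ s) :
    limsup (logRate fun n => betaM n n A) atTop ≤ elog (4 * s) := by
  refine le_elog_of_forall_le_log (by positivity) fun ρ hρ => ?_
  have hρ₀ : 0 < ρ := by linarith
  obtain ⟨t, ht₀, ht, rfl⟩ : ∃ t, 0 ≤ t ∧ t < 1 / 4 ∧ s = t * ρ :=
    ⟨s / ρ, by positivity, by rw [div_lt_iff₀ hρ₀]; linarith, by field_simp⟩
  set δ := 1 / 4 - t with hδ_def
  have hδ : 0 < δ := by linarith
  -- the window `[1/2 - δ, 1/2 + δ]` of `le_betaNorm` keeps `(1/4 - δ ^ 2) * ρ ≥ s`, as `δ ^ 2 ≤ δ`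
  have hq : t ≤ 1 / 4 - δ ^ 2 := by nlinarith
  have hq₀ : 0 < 1 / 4 - δ ^ 2 := by nlinarith
  have hsq : t * ρ / (1 / 4 - δ ^ 2) ≤ ρ := by
    rw [div_le_iff₀ hq₀]
    nlinarith
  refine limsup_logRate_le (C := (2 * δ)⁻¹) (by positivity) hρ₀ (.of_forall fun n => ?_)
  calc betaM n n A ≤ (betaNorm n)⁻¹ * ENNReal.ofReal ((t * ρ) ^ (n - 1)) := betaM_self_le n h
    _ ≤ (ENNReal.ofReal (2 * δ * (1 / 4 - δ ^ 2) ^ (n - 1)))⁻¹ *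
          ENNReal.ofReal ((t * ρ) ^ (n - 1)) := by
        gcongr
        exact le_betaNorm n hδ.le (by linarith)
    _ ≤ ENNReal.ofReal ((2 * δ)⁻¹ * ρ ^ (n - 1)) := by
        rw [← ENNReal.ofReal_inv_of_pos (by positivity), ← ENNReal.ofReal_mul (by positivity)]
        refine ENNReal.ofReal_le_ofReal ?_
        rw [mul_inv, mul_assoc, ← div_eq_inv_mul ((t * ρ) ^ (n - 1)), ← div_pow]
        gcongr

lemma exists_Icc_subset_of_mem_interior {A : Set I01} {x : I01} {r : ℝ} (hx : x ∈ interior A)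
    (hr : r < mulOneSub x) :
    ∃ ε > 0, Subtype.val ⁻¹' Set.Icc ((x : ℝ) - ε) (x + ε) ⊆ A ∧
      ∀ y ∈ Set.Icc ((x : ℝ) - ε) (x + ε), r ≤ y * (1 - y) := by
  obtain ⟨t, ht, htA⟩ : ∃ t ∈ 𝓝 (x : ℝ), Subtype.val ⁻¹' t ⊆ interior A := by
    rw [← mem_comap, ← nhds_subtype]
    exact isOpen_interior.mem_nhds hx
  have hr' : {y : ℝ | r < y * (1 - y)} ∈ 𝓝 (x : ℝ) :=
    (isOpen_lt continuous_const (by fun_prop)).mem_nhds hr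
  obtain ⟨ε, hε, hball⟩ := Metric.nhds_basis_closedBall.mem_iff.1 (inter_mem ht hr')
  rw [Real.closedBall_eq_Icc] at hball
  exact ⟨ε, hε, fun y hy => interior_subset (htA (hball hy).1), fun y hy => (hball hy).2.le⟩

lemma le_liminf_logRate_betaM {A : Set I01} {x : I01} (hx : x ∈ interior A) :
    elog (4 * mulOneSub x) ≤ liminf (logRate fun n => betaM n n A) atTop := by
  refine elog_le_of_forall_log_le fun ρ hρ hρx => ?_
  obtain ⟨ε, hε, hA, hr⟩ := exists_Icc_subset_of_mem_interior hx (r := ρ / 4) (by linarith)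
  refine le_liminf_logRate (C := 2 * ε) (by positivity) hρ (.of_forall fun n => ?_)
  calc ENNReal.ofReal (2 * ε * ρ ^ (n - 1))
      = (ENNReal.ofReal ((1 / 4) ^ (n - 1)))⁻¹ *
          ENNReal.ofReal ((x + ε - (x - ε)) * (ρ / 4) ^ (n - 1)) := by
        rw [← ENNReal.ofReal_inv_of_pos (by positivity), ← ENNReal.ofReal_mul (by positivity),
          div_eq_mul_one_div ρ 4, mul_pow]
        congr 1
        field_simp
        ring
    _ ≤ (betaNorm n)⁻¹ * ENNReal.ofReal ((x + ε - (x - ε)) * (ρ / 4) ^ (n - 1)) := by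
        gcongr
        exact betaNorm_le n
    _ ≤ betaM n n A := le_betaM_self n (by positivity) hr hA

end BetaLDP

open BetaLDP in
theorem stmt7 :
    IsLDP (fun n A => betaM n n A) (fun n => 1 / (n : ℝ)) betaRate ∧ GoodRate betaRate := by
  refine ⟨⟨continuous_betaRate.lowerSemicontinuous, fun A => ⟨?_, ?_⟩⟩,
    fun a => (isClosed_le continuous_betaRate continuous_const).isCompact⟩
  · rw [EReal.neg_le]
    refine le_iInf₂ fun x hx => EReal.neg_le.1 ?_
    rw [betaRate_eq_neg_elog, neg_neg]
    exact le_liminf_logRate_betaM hx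
  · rcases (closure A).eq_empty_or_nonempty with hA | hA
    · rw [hA, iInf_emptyset, EReal.neg_top]
      have h0 : elog (4 * 0) = ⊥ := by simp [elog]
      exact h0 ▸ limsup_logRate_betaM_le le_rfl fun x hx => by simpa [hA] using subset_closure hx
    · obtain ⟨y, hy, hmax⟩ := isClosed_closure.isCompact.exists_isMaxOn hA
        continuous_mulOneSub.continuousOn
      have hinf : ⨅ x ∈ closure A, betaRate x = betaRate y :=
        le_antisymm (iInf₂_le y hy) (le_iInf₂ fun x hx => betaRate_le_of_mulOneSub_le (hmax hx))
      rw [hinf, betaRate_eq_neg_elog, neg_neg]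
      exact limsup_logRate_betaM_le (mulOneSub_nonneg y) fun x hx => hmax (subset_closure hx)

end Statements
end

section
/- Let (u_n) be a sequence of positive reals decreasing to 0 with 1/n = o(u_n) (i.e. n·u_n → ∞), and let l ∈ ℕ be fixed. For n > l let Y_n be a random variable with Beta(n−l, n−l) distribution and set X_n := √(n u_n)(Y_n − 1/2). Then (X_n) satisfies, on ℝ with speed (u_n), the large deviation principle with good rate function J_1(x) = 4x². -/
open MeasureTheory Filter Topology Matrix ProbabilityTheory
open scoped ENNReal NNReal Classical

/-!
With `t = y - 1/2` and `k = n - l - 1`, the density of `β(k + 1, k + 1)` is proportional to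
`(1 - 4t²)^k`, which lies between `exp(-k(4t² + 32t⁴))` (for `4t² ≤ 1/2`) and `exp(-4kt²)`.
Gaussian integrals then bound the normalising constant above and below by multiples of `1/√k`,
and the mass of `{4t² ≥ ρ}` by `C_θ exp(-(1 - θ)kρ)` uniformly in `k`.  For
`X_n = √(n u_n) t`, a set on which `4x² ≥ c` forces `4t² ≥ c / (n u_n)`, so its mass is at most
`C_θ exp(-(1 - θ) c (k/n) / u_n)`; an interval `[x - r, x + r]` has mass at least
`r exp(-(4(|x| + r)² + O(1/(n u_n))) / u_n)`.  Letting `θ, r → 0` gives both LDP bounds.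
-/

theorem ENNReal.inv_mul_le_ofReal_div {Z T : ℝ≥0∞} {z t : ℝ} (hz : 0 < z)
    (hZ : ENNReal.ofReal z ≤ Z) (hT : T ≤ ENNReal.ofReal t) : Z⁻¹ * T ≤ ENNReal.ofReal (t / z) := by
  rw [ENNReal.ofReal_div_of_pos hz, div_eq_mul_inv, mul_comm (ENNReal.ofReal t)]
  exact mul_le_mul' (ENNReal.inv_le_inv' hZ) hT

theorem ENNReal.ofReal_div_le_inv_mul {Z T : ℝ≥0∞} {z t : ℝ} (hz : 0 < z)
    (hZ : Z ≤ ENNReal.ofReal z) (hT : ENNReal.ofReal t ≤ T) : ENNReal.ofReal (t / z) ≤ Z⁻¹ * T := by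
  rw [ENNReal.ofReal_div_of_pos hz, div_eq_mul_inv, mul_comm]
  exact mul_le_mul' (ENNReal.inv_le_inv' hZ) hT

theorem EReal.le_neg_of_forall_coe_le {Λ m : EReal} (h : ∀ c : ℝ, (c : EReal) ≤ m → Λ ≤ -c) :
    Λ ≤ -m := by
  induction m using EReal.rec with
  | bot => exact le_top
  | coe m => exact h m le_rfl
  | top =>
    rw [EReal.neg_top, le_bot_iff, EReal.eq_bot_iff_forall_lt]
    intro y
    calc Λ ≤ -((1 - y : ℝ) : EReal) := h _ le_top
      _ < y := by rw [← EReal.coe_neg, EReal.coe_lt_coe_iff]; linarith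

noncomputable section
namespace BetaLDP
open Real Set

lemma one_sub_pow_le_exp_neg_mul {z : ℝ} (k : ℕ) (hz1 : z ≤ 1) :
    (1 - z) ^ k ≤ exp (-(k * z)) := by
  calc (1 - z) ^ k ≤ exp (-z) ^ k :=
        pow_le_pow_left₀ (by linarith) (by linarith [add_one_le_exp (-z)]) k
    _ = exp (-(k * z)) := by rw [← exp_nat_mul, mul_neg]

lemma exp_neg_mul_le_one_sub_pow {z : ℝ} (k : ℕ) (hz : z ≤ 1 / 2) :
    exp (-(k * (z + 2 * z ^ 2))) ≤ (1 - z) ^ k := by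
  -- `(1 - z) (1 + z + 2 z²) = 1 + z² (1 - 2z) ≥ 1`
  have hbase : exp (-(z + 2 * z ^ 2)) ≤ 1 - z := by
    rw [exp_neg, inv_le_comm₀ (exp_pos _) (by linarith), ← one_div,
      div_le_iff₀ (by linarith)]
    nlinarith [add_one_le_exp (z + 2 * z ^ 2)]
  calc exp (-(k * (z + 2 * z ^ 2))) = exp (-(z + 2 * z ^ 2)) ^ k := by
        rw [← exp_nat_mul, mul_neg]
    _ ≤ (1 - z) ^ k := pow_le_pow_left₀ (exp_pos _).le hbase k

lemma lintegral_ofReal_exp_neg_mul_sub_sq {b : ℝ} (hb : 0 < b) (c : ℝ) :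
    ∫⁻ x : ℝ, ENNReal.ofReal (exp (-(b * (x - c) ^ 2))) = ENNReal.ofReal (√(π / b)) := by
  rw [← ofReal_integral_eq_lintegral_ofReal
    (((integrable_exp_neg_mul_sq hb).comp_sub_right c).congr (by simp [neg_mul]))
    (Eventually.of_forall fun x => (exp_pos _).le),
    integral_sub_right_eq_self (fun x => exp (-(b * x ^ 2))) c]
  simp_rw [← neg_mul, integral_gaussian]

/-- Since `y (1 - y) = (1 - 4 (y - 1/2) ^ 2) / 4`, this is `4 ^ k` times the unnormalised density
of `β(k + 1, k + 1)`. -/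
def centredBetaKernel (k : ℕ) (y : ℝ) : ℝ≥0∞ := ENNReal.ofReal ((1 - 4 * (y - 1 / 2) ^ 2) ^ k)

@[fun_prop]
lemma measurable_centredBetaKernel (k : ℕ) : Measurable (centredBetaKernel k) := by
  unfold centredBetaKernel; fun_prop

lemma setLIntegral_centredBetaKernel_le (k : ℕ) (hk : 0 < k) (ρ : ℝ) {θ : ℝ} (hθ : 0 < θ)
    (hθ1 : θ ≤ 1) :
    ∫⁻ y in {y | ρ ≤ 4 * (y - 1 / 2) ^ 2} ∩ Icc 0 1, centredBetaKernel k y ≤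
      ENNReal.ofReal (exp (-((1 - θ) * k * ρ)) * √(π / (4 * θ * k))) := by
  have hpt : ∀ y ∈ {y | ρ ≤ 4 * (y - 1 / 2) ^ 2} ∩ Icc (0 : ℝ) 1, centredBetaKernel k y ≤
      ENNReal.ofReal (exp (-((1 - θ) * k * ρ)) * exp (-(4 * θ * k * (y - 1 / 2) ^ 2))) := by
    rintro y ⟨hρy, hy0, hy1⟩
    refine ENNReal.ofReal_le_ofReal ?_
    rw [← exp_add]
    refine (one_sub_pow_le_exp_neg_mul k (by nlinarith)).trans (exp_le_exp.mpr ?_)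
    have : (1 - θ) * k * ρ ≤ (1 - θ) * k * (4 * (y - 1 / 2) ^ 2) :=
      mul_le_mul_of_nonneg_left hρy (by positivity [sub_nonneg.mpr hθ1])
    linarith
  calc _ ≤ ∫⁻ y in {y | ρ ≤ 4 * (y - 1 / 2) ^ 2} ∩ Icc 0 1,
        ENNReal.ofReal (exp (-((1 - θ) * k * ρ)) * exp (-(4 * θ * k * (y - 1 / 2) ^ 2))) :=
        setLIntegral_mono (by fun_prop) hpt
    _ ≤ ∫⁻ y, ENNReal.ofReal (exp (-((1 - θ) * k * ρ)) * exp (-(4 * θ * k * (y - 1 / 2) ^ 2))) :=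
        setLIntegral_le_lintegral _ _
    _ = _ := by
        simp_rw [ENNReal.ofReal_mul (exp_pos _).le]
        rw [lintegral_const_mul _ (by fun_prop),
          lintegral_ofReal_exp_neg_mul_sub_sq (by positivity), ← ENNReal.ofReal_mul (exp_pos _).le]

lemma lintegral_centredBetaKernel_le (k : ℕ) (hk : 0 < k) :
    ∫⁻ y in Icc 0 1, centredBetaKernel k y ≤ ENNReal.ofReal √(π / (4 * k)) := by
  have hall : {y : ℝ | (0 : ℝ) ≤ 4 * (y - 1 / 2) ^ 2} = univ :=
    eq_univ_of_forall fun y => by simp only [mem_ofPred_eq]; positivity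
  have h := setLIntegral_centredBetaKernel_le k hk 0 one_pos le_rfl
  rw [hall, univ_inter] at h
  simpa using h

lemma le_setLIntegral_centredBetaKernel (k : ℕ) {a b ζ : ℝ}
    (hζ : ∀ y ∈ Icc a b, 4 * (y - 1 / 2) ^ 2 ≤ ζ) (hζ2 : ζ ≤ 1 / 2) :
    ENNReal.ofReal ((b - a) * exp (-(k * (ζ + 2 * ζ ^ 2)))) ≤
      ∫⁻ y in Icc a b, centredBetaKernel k y := by
  have hpt : ∀ y ∈ Icc a b,
      ENNReal.ofReal (exp (-(k * (ζ + 2 * ζ ^ 2)))) ≤ centredBetaKernel k y := by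
    intro y hy
    set z := 4 * (y - 1 / 2) ^ 2
    have hz0 : 0 ≤ z := by positivity
    have hzζ : z ≤ ζ := hζ y hy
    refine ENNReal.ofReal_le_ofReal ((exp_le_exp.mpr ?_).trans
      (exp_neg_mul_le_one_sub_pow k (hzζ.trans hζ2)))
    have : z + 2 * z ^ 2 ≤ ζ + 2 * ζ ^ 2 := by nlinarith
    exact neg_le_neg (mul_le_mul_of_nonneg_left this k.cast_nonneg)
  calc ENNReal.ofReal ((b - a) * exp (-(k * (ζ + 2 * ζ ^ 2))))
      = ∫⁻ _ in Icc a b, ENNReal.ofReal (exp (-(k * (ζ + 2 * ζ ^ 2)))) := by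
        rw [setLIntegral_const, Real.volume_Icc, mul_comm, ENNReal.ofReal_mul (exp_pos _).le]
    _ ≤ _ := setLIntegral_mono (by fun_prop) hpt

lemma le_lintegral_centredBetaKernel (k : ℕ) (hk : 0 < k) :
    ENNReal.ofReal (1 / (exp 1 * √(2 * k))) ≤ ∫⁻ y in Icc 0 1, centredBetaKernel k y := by
  have hk1 : (1 : ℝ) ≤ k := by exact_mod_cast hk
  set ε := 1 / (2 * √(2 * k))
  have hsqrt : 1 ≤ √(2 * k) := by rw [Real.one_le_sqrt]; linarith
  have hε : ε ≤ 1 / 2 := by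
    rw [div_le_div_iff₀ (by positivity) two_pos]; linarith
  have hε2 : 4 * ε ^ 2 = 1 / (2 * k) := by
    rw [div_pow, mul_pow, sq_sqrt (by positivity)]; field_simp; ring
  have hbound := le_setLIntegral_centredBetaKernel k (a := 1 / 2 - ε) (b := 1 / 2 + ε)
    (ζ := 1 / (2 * k)) (fun y ⟨hy0, hy1⟩ => by rw [← hε2]; nlinarith)
    (by rw [div_le_div_iff₀ (by positivity) two_pos]; linarith)
  refine le_trans ?_ (hbound.trans (lintegral_mono_set (Icc_subset_Icc (by linarith)
    (by linarith))))
  refine ENNReal.ofReal_le_ofReal ?_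
  have hexp : exp (-1) ≤ exp (-(k * (1 / (2 * k) + 2 * (1 / (2 * k)) ^ 2))) := by
    refine exp_le_exp.mpr (neg_le_neg ?_)
    have : (k : ℝ) * (1 / (2 * k) + 2 * (1 / (2 * k)) ^ 2) = 1 / 2 + 1 / (2 * k) := by
      field_simp
    have : 1 / (2 * (k : ℝ)) ≤ 1 / 2 := by
      rw [div_le_div_iff₀ (by positivity) two_pos]; linarith
    linarith
  have hwidth : 1 / 2 + ε - (1 / 2 - ε) = 1 / √(2 * k) := by
    simp only [ε]; field_simp; ring
  rw [hwidth]
  calc 1 / (exp 1 * √(2 * k)) = 1 / √(2 * k) * exp (-1) := by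
        rw [Real.exp_neg]; field_simp
    _ ≤ _ := mul_le_mul_of_nonneg_left hexp (by positivity)

lemma betaDen_succ (k : ℕ) (y : I01) :
    betaDen (k + 1) (k + 1) y = ENNReal.ofReal ((1 / 4) ^ k) * centredBetaKernel k y := by
  rw [betaDen, centredBetaKernel, ← ENNReal.ofReal_mul (by positivity), ← mul_pow,
    Nat.add_sub_cancel, ← mul_pow]
  ring_nf

lemma setLIntegral_betaDen_succ (k : ℕ) (T : Set ℝ) :
    ∫⁻ x in Subtype.val ⁻¹' T, betaDen (k + 1) (k + 1) x =
      ENNReal.ofReal ((1 / 4) ^ k) * ∫⁻ y in T ∩ Icc 0 1, centredBetaKernel k y := by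
  simp_rw [betaDen_succ]
  rw [lintegral_const_mul _ (by fun_prop)]
  congr 1
  rw [show (volume : Measure I01) = volume.comap Subtype.val from rfl,
    setLIntegral_subtype measurableSet_Icc _ (centredBetaKernel k), Subtype.image_preimage_coe,
    inter_comm]

lemma betaM_succ_preimage_val (k : ℕ) {T : Set ℝ} (hT : MeasurableSet T) :
    betaM (k + 1) (k + 1) (Subtype.val ⁻¹' T) =
      (∫⁻ y in Icc 0 1, centredBetaKernel k y)⁻¹ * ∫⁻ y in T ∩ Icc 0 1, centredBetaKernel k y := by
  have hc0 : ENNReal.ofReal ((1 / 4) ^ k) ≠ 0 := by positivity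
  have hctop : ENNReal.ofReal ((1 / 4) ^ k) ≠ ⊤ := ENNReal.ofReal_ne_top
  rw [betaM, Measure.smul_apply, smul_eq_mul, withDensity_apply _ (measurable_subtype_coe hT),
    ← setLIntegral_univ, ← preimage_univ (f := Subtype.val), setLIntegral_betaDen_succ k T,
    setLIntegral_betaDen_succ k univ, univ_inter, ENNReal.mul_inv (.inl hc0)
    (.inl hctop), mul_mul_mul_comm, ENNReal.inv_mul_cancel hc0 hctop, one_mul]

lemma betaM_preimage_le (k : ℕ) (hk : 0 < k) {s : ℝ} (hs : 0 < s) {A : Set ℝ} {c θ : ℝ}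
    (hθ : 0 < θ) (hθ1 : θ ≤ 1) (hA : ∀ x ∈ A, c ≤ 4 * x ^ 2) :
    betaM (k + 1) (k + 1) ((fun y : I01 => s * ((y : ℝ) - 1 / 2)) ⁻¹' A) ≤
      ENNReal.ofReal (exp 1 * √(π / (2 * θ)) * exp (-((1 - θ) * k * (c / s ^ 2)))) := by
  have hsub : (fun y : I01 => s * ((y : ℝ) - 1 / 2)) ⁻¹' A ⊆
      Subtype.val ⁻¹' {y | c / s ^ 2 ≤ 4 * (y - 1 / 2) ^ 2} := fun y hy => by
    have := hA _ hy
    simp only [mem_preimage, mem_ofPred_eq]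
    rw [div_le_iff₀ (by positivity)]
    linarith
  refine (measure_mono hsub).trans ?_
  rw [betaM_succ_preimage_val k (measurableSet_le measurable_const (by fun_prop))]
  refine (ENNReal.inv_mul_le_ofReal_div (by positivity) (le_lintegral_centredBetaKernel k hk)
    (setLIntegral_centredBetaKernel_le k hk _ hθ hθ1)).trans (ENNReal.ofReal_le_ofReal
    (le_of_eq ?_))
  have hk0 : (0 : ℝ) < k := by exact_mod_cast hk
  -- the factors `√k` of the tail and of the normalising constant cancel
  have hsqrt : √(π / (4 * θ * k)) * √(2 * k) = √(π / (2 * θ)) := by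
    rw [← sqrt_mul (by positivity)]
    congr 1
    field_simp
    ring
  rw [← hsqrt]
  field_simp

lemma le_betaM_preimage_Icc (k : ℕ) (hk : 0 < k) {s x r ζ : ℝ} (hs : 0 < s) (hr : 0 ≤ r)
    (hζ : 4 * (|x| + r) ^ 2 ≤ ζ * s ^ 2) (hζ2 : ζ ≤ 1 / 2) :
    ENNReal.ofReal (2 * r / s * √k * exp (-(k * (ζ + 2 * ζ ^ 2)))) ≤
      betaM (k + 1) (k + 1) ((fun y : I01 => s * ((y : ℝ) - 1 / 2)) ⁻¹' Icc (x - r) (x + r)) := by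
  set a := 1 / 2 + (x - r) / s with ha
  set b := 1 / 2 + (x + r) / s with hb
  have hζab : ∀ y ∈ Icc a b, 4 * (y - 1 / 2) ^ 2 ≤ ζ := by
    rintro y ⟨hay, hyb⟩
    have hlo : -((|x| + r) / s) ≤ y - 1 / 2 := by
      have : -(|x| + r) ≤ x - r := by linarith [neg_abs_le x]
      have := div_le_div_of_nonneg_right this hs.le
      rw [neg_div] at this
      linarith
    have hhi : y - 1 / 2 ≤ (|x| + r) / s := by
      have := div_le_div_of_nonneg_right (by linarith [le_abs_self x] : x + r ≤ |x| + r) hs.le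
      linarith
    have hsq := sq_le_sq' hlo hhi
    rw [div_pow, le_div_iff₀ (by positivity)] at hsq
    rw [← mul_le_mul_iff_of_pos_right (show 0 < s ^ 2 by positivity)]
    linarith
  have hab01 : Icc a b ⊆ Icc 0 1 := fun y hy => by
    have := (hζab y hy).trans hζ2
    constructor <;> nlinarith
  have hsub : Subtype.val ⁻¹' Icc a b ⊆
      (fun y : I01 => s * ((y : ℝ) - 1 / 2)) ⁻¹' Icc (x - r) (x + r) := by
    rintro y ⟨hay, hyb⟩
    constructor
    · exact (div_le_iff₀' hs).mp (show (x - r) / s ≤ (y : ℝ) - 1 / 2 by linarith)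
    · exact (le_div_iff₀' hs).mp (show (y : ℝ) - 1 / 2 ≤ (x + r) / s by linarith)
  refine le_trans ?_ (measure_mono hsub)
  rw [betaM_succ_preimage_val k measurableSet_Icc, inter_eq_left.mpr hab01]
  refine le_trans ?_ (ENNReal.ofReal_div_le_inv_mul (by positivity)
    (lintegral_centredBetaKernel_le k hk) (le_setLIntegral_centredBetaKernel k hζab hζ2))
  refine ENNReal.ofReal_le_ofReal ?_
  have hk0 : (0 : ℝ) < k := by exact_mod_cast hk
  have hba : b - a = 2 * r / s := by rw [ha, hb]; ring
  have hsqrt : √k * √(π / (4 * k)) ≤ 1 := by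
    rw [← sqrt_mul hk0.le, sqrt_le_one]
    field_simp
    linarith [pi_lt_four]
  rw [hba, le_div_iff₀ (by positivity)]
  calc 2 * r / s * √k * exp (-(k * (ζ + 2 * ζ ^ 2))) * √(π / (4 * k))
      = 2 * r / s * exp (-(k * (ζ + 2 * ζ ^ 2))) * (√k * √(π / (4 * k))) := by ring
    _ ≤ 2 * r / s * exp (-(k * (ζ + 2 * ζ ^ 2))) * 1 :=
        mul_le_mul_of_nonneg_left hsqrt (by positivity)
    _ = _ := mul_one _

lemma coe_mul_log_le {t : ℝ} (ht : 0 ≤ t) {p : ℝ≥0∞} {B : ℝ} (hB : 0 < B)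
    (h : p ≤ ENNReal.ofReal B) : (t : EReal) * ENNReal.log p ≤ ((t * log B : ℝ) : EReal) := by
  rw [EReal.coe_mul, ← ENNReal.log_ofReal_of_pos hB]
  exact mul_le_mul_of_nonneg_left (ENNReal.log_monotone h) (EReal.coe_nonneg.mpr ht)

lemma le_coe_mul_log {t : ℝ} (ht : 0 ≤ t) {p : ℝ≥0∞} {B : ℝ} (hB : 0 < B)
    (h : ENNReal.ofReal B ≤ p) : ((t * log B : ℝ) : EReal) ≤ (t : EReal) * ENNReal.log p := by
  rw [EReal.coe_mul, ← ENNReal.log_ofReal_of_pos hB]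
  exact mul_le_mul_of_nonneg_left (ENNReal.log_monotone h) (EReal.coe_nonneg.mpr ht)

lemma limsup_coe_mul_log_le {u : ℕ → ℝ} (hu : ∀ n, 0 ≤ u n) {p : ℕ → ℝ≥0∞} (B : ℕ → ℝ)
    (hB : ∀ᶠ n in atTop, 0 < B n ∧ p n ≤ ENNReal.ofReal (B n)) {L : ℝ}
    (hL : Tendsto (fun n => u n * log (B n)) atTop (𝓝 L)) :
    limsup (fun n => (u n : EReal) * ENNReal.log (p n)) atTop ≤ L := by
  rw [← (EReal.tendsto_coe.mpr hL).limsup_eq]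
  exact limsup_le_limsup (hB.mono fun n hn => coe_mul_log_le (hu n) hn.1 hn.2)

lemma le_liminf_coe_mul_log {u : ℕ → ℝ} (hu : ∀ n, 0 ≤ u n) {p : ℕ → ℝ≥0∞} (B : ℕ → ℝ)
    (hB : ∀ᶠ n in atTop, 0 < B n ∧ ENNReal.ofReal (B n) ≤ p n) {L : ℝ}
    (hL : Tendsto (fun n => u n * log (B n)) atTop (𝓝 L)) :
    (L : EReal) ≤ liminf (fun n => (u n : EReal) * ENNReal.log (p n)) atTop := by
  rw [← (EReal.tendsto_coe.mpr hL).liminf_eq]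
  exact liminf_le_liminf (hB.mono fun n hn => le_coe_mul_log (hu n) hn.1 hn.2)

lemma tendsto_natSub_div_atTop (m : ℕ) :
    Tendsto (fun n : ℕ => ((n - m : ℕ) : ℝ) / n) atTop (𝓝 1) := by
  have h : Tendsto (fun n : ℕ => 1 - (m : ℝ) * (1 / n)) atTop (𝓝 1) := by
    simpa using (tendsto_one_div_atTop_nhds_zero_nat.const_mul (m : ℝ)).const_sub 1
  refine h.congr' ?_
  filter_upwards [eventually_ge_atTop (m + 1)] with n hn
  rw [Nat.cast_sub (by omega), sub_div, div_self (Nat.cast_ne_zero.mpr (by omega))]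
  ring

def scaledBetaLaw (l : ℕ) (u : ℕ → ℝ) (n : ℕ) (A : Set ℝ) : ℝ≥0∞ :=
  betaM (n - l) (n - l) ((fun y : I01 => √((n : ℝ) * u n) * ((y : ℝ) - 1 / 2)) ⁻¹' A)

lemma ofReal_le_scaledBetaLaw (l : ℕ) {u : ℕ → ℝ} {n : ℕ} (hn : 4 * (l + 1) ≤ n) (hun : 0 < u n)
    (hu1 : u n ≤ 1) {A : Set ℝ} {x r ζ : ℝ} (hr : 0 ≤ r) (hA : Icc (x - r) (x + r) ⊆ A)
    (hζ : 4 * (|x| + r) ^ 2 ≤ ζ * (n * u n)) (hζ0 : 0 ≤ ζ) (hζ2 : ζ ≤ 1 / 2) :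
    ENNReal.ofReal (r * exp (-(n * (ζ + 2 * ζ ^ 2)))) ≤ scaledBetaLaw l u n A := by
  set k := n - (l + 1)
  have hnu0 : 0 < (n : ℝ) * u n := mul_pos (Nat.cast_pos.mpr (by omega)) hun
  have hs : 0 < √((n : ℝ) * u n) := sqrt_pos.mpr hnu0
  have hmass := (le_betaM_preimage_Icc k (by omega) hs hr (by rwa [sq_sqrt hnu0.le]) hζ2).trans
    (measure_mono (preimage_mono hA))
  rw [show k + 1 = n - l by omega] at hmass
  refine le_trans (ENNReal.ofReal_le_ofReal ?_) hmass
  -- `√k / √(n u_n)` cannot be discarded, as `u_n log n` need not vanish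
  have hlen : r ≤ 2 * r / √((n : ℝ) * u n) * √k := by
    have hk : (n : ℝ) ≤ 4 * k := by exact_mod_cast (show n ≤ 4 * k by omega)
    have : √((n : ℝ) * u n) ≤ 2 * √k := by
      rw [sqrt_le_left (by positivity), mul_pow, sq_sqrt k.cast_nonneg]
      nlinarith
    rw [div_mul_eq_mul_div, le_div_iff₀ hs]
    nlinarith
  have hexp : exp (-(n * (ζ + 2 * ζ ^ 2))) ≤ exp (-(k * (ζ + 2 * ζ ^ 2))) :=
    exp_le_exp.mpr (neg_le_neg (mul_le_mul_of_nonneg_right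
      (by exact_mod_cast Nat.sub_le n (l + 1)) (by positivity)))
  exact mul_le_mul hlen hexp (exp_pos _).le (by positivity)

section
variable (l : ℕ) {u : ℕ → ℝ} (hu_pos : ∀ n, 0 < u n) (hu0 : Tendsto u atTop (𝓝 0))
include hu_pos hu0

lemma limsup_scaledBetaLaw_le {A : Set ℝ} {c θ : ℝ} (hθ : 0 < θ) (hθ1 : θ ≤ 1)
    (hA : ∀ x ∈ A, c ≤ 4 * x ^ 2) :
    limsup (fun n => (u n : EReal) * ENNReal.log (scaledBetaLaw l u n A)) atTop ≤
      ((-((1 - θ) * c) : ℝ) : EReal) := by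
  set C := exp 1 * √(π / (2 * θ))
  have hC : 0 < C := by positivity
  refine limsup_coe_mul_log_le (fun n => (hu_pos n).le)
    (fun n => C * exp (-((1 - θ) * (n - (l + 1) : ℕ) * (c / (n * u n))))) ?_ ?_
  · filter_upwards [eventually_ge_atTop (l + 2)] with n hn
    refine ⟨by positivity, ?_⟩
    have hnu : 0 < (n : ℝ) * u n := mul_pos (Nat.cast_pos.mpr (by omega)) (hu_pos n)
    have := betaM_preimage_le (n - (l + 1)) (by omega) (sqrt_pos.mpr hnu) hθ hθ1 hA
    rwa [sq_sqrt hnu.le, show n - (l + 1) + 1 = n - l by omega] at this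
  · have hlim : Tendsto (fun n : ℕ => u n * log C - (1 - θ) * c * ((n - (l + 1) : ℕ) / n))
        atTop (𝓝 (-((1 - θ) * c))) := by
      simpa using (hu0.mul_const (log C)).sub
        ((tendsto_natSub_div_atTop (l + 1)).const_mul ((1 - θ) * c))
    refine hlim.congr' ?_
    filter_upwards [eventually_gt_atTop 0] with n hn
    have := (hu_pos n).ne'
    rw [log_mul (by positivity) (exp_pos _).ne', log_exp]
    field_simp
    ring

lemma limsup_scaledBetaLaw_le_neg {A : Set ℝ} {c : ℝ} (hA : ∀ x ∈ A, c ≤ 4 * x ^ 2) :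
    limsup (fun n => (u n : EReal) * ENNReal.log (scaledBetaLaw l u n A)) atTop ≤
      ((-c : ℝ) : EReal) := by
  have hlim : Tendsto (fun θ : ℝ => ((-((1 - θ) * c) : ℝ) : EReal)) (𝓝[>] 0) (𝓝 ((-c : ℝ))) :=
    ((continuous_coe_real_ereal.comp (by fun_prop)).tendsto' 0 _ (by simp)).mono_left
      nhdsWithin_le_nhds
  refine ge_of_tendsto hlim ?_
  filter_upwards [Ioc_mem_nhdsGT one_pos] with θ hθ
  exact limsup_scaledBetaLaw_le l hu_pos hu0 hθ.1 hθ.2 hA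

lemma limsup_scaledBetaLaw_le_neg_iInf (A : Set ℝ) :
    limsup (fun n => (u n : EReal) * ENNReal.log (scaledBetaLaw l u n A)) atTop ≤
      -(⨅ x ∈ closure A, ((4 * x ^ 2 : ℝ) : EReal)) :=
  EReal.le_neg_of_forall_coe_le fun c hc => by
    rw [← EReal.coe_neg]
    exact limsup_scaledBetaLaw_le_neg l hu_pos hu0 fun x hx =>
      EReal.coe_le_coe_iff.mp (hc.trans (iInf₂_le x (subset_closure hx)))

variable (hnu : Tendsto (fun n : ℕ => (n : ℝ) * u n) atTop atTop)
include hnu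

lemma le_liminf_scaledBetaLaw {A : Set ℝ} {x r : ℝ} (hr : 0 < r)
    (hA : Icc (x - r) (x + r) ⊆ A) :
    ((-(4 * (|x| + r) ^ 2) : ℝ) : EReal) ≤
      liminf (fun n => (u n : EReal) * ENNReal.log (scaledBetaLaw l u n A)) atTop := by
  set M := |x| + r
  refine le_liminf_coe_mul_log (fun n => (hu_pos n).le)
    (fun n => r * exp (-(n * (4 * M ^ 2 / (n * u n) + 2 * (4 * M ^ 2 / (n * u n)) ^ 2)))) ?_ ?_
  · filter_upwards [eventually_ge_atTop (4 * (l + 1)), hu0.eventually (ge_mem_nhds one_pos),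
      hnu.eventually_ge_atTop (8 * M ^ 2)] with n hn hu1 hnuM
    have hnu0 : 0 < (n : ℝ) * u n := mul_pos (Nat.cast_pos.mpr (by omega)) (hu_pos n)
    refine ⟨by positivity, ofReal_le_scaledBetaLaw l hn (hu_pos n) hu1 hr.le hA
      (div_mul_cancel₀ _ hnu0.ne').ge (by positivity) ?_⟩
    rw [div_le_div_iff₀ hnu0 two_pos]
    linarith
  · have hlim : Tendsto (fun n : ℕ => u n * log r - (4 * M ^ 2 + 32 * M ^ 4 * (n * u n)⁻¹))
        atTop (𝓝 (-(4 * M ^ 2))) := by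
      simpa using (hu0.mul_const (log r)).sub
        ((tendsto_inv_atTop_zero.comp hnu).const_mul (32 * M ^ 4) |>.const_add (4 * M ^ 2))
    refine hlim.congr' ?_
    filter_upwards [eventually_gt_atTop 0] with n hn
    have := (hu_pos n).ne'
    rw [log_mul hr.ne' (exp_pos _).ne', log_exp]
    field_simp
    ring

lemma le_liminf_scaledBetaLaw_of_mem_interior {A : Set ℝ} {x : ℝ} (hx : x ∈ interior A) :
    ((-(4 * x ^ 2) : ℝ) : EReal) ≤
      liminf (fun n => (u n : EReal) * ENNReal.log (scaledBetaLaw l u n A)) atTop := by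
  have hlim : Tendsto (fun r : ℝ => ((-(4 * (|x| + r) ^ 2) : ℝ) : EReal)) (𝓝[>] 0)
      (𝓝 ((-(4 * x ^ 2) : ℝ))) :=
    ((continuous_coe_real_ereal.comp (by fun_prop)).tendsto' 0 _ (by simp)).mono_left
      nhdsWithin_le_nhds
  refine le_of_tendsto hlim ?_
  filter_upwards [self_mem_nhdsWithin, nhdsWithin_le_nhds
    (eventually_closedBall_subset (mem_interior_iff_mem_nhds.mp hx))] with r hr hball
  exact le_liminf_scaledBetaLaw l hu_pos hu0 hnu hr (Real.closedBall_eq_Icc ▸ hball)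

lemma neg_iInf_le_liminf_scaledBetaLaw (A : Set ℝ) :
    -(⨅ x ∈ interior A, ((4 * x ^ 2 : ℝ) : EReal)) ≤
      liminf (fun n => (u n : EReal) * ENNReal.log (scaledBetaLaw l u n A)) atTop := by
  rw [EReal.neg_le]
  refine le_iInf₂ fun x hx => EReal.neg_le.mp ?_
  rw [← EReal.coe_neg]
  exact le_liminf_scaledBetaLaw_of_mem_interior l hu_pos hu0 hnu hx

end

lemma goodRate_four_mul_sq : GoodRate fun x : ℝ => ((4 * x ^ 2 : ℝ) : EReal) := by
  intro a
  simp only [EReal.coe_le_coe_iff]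
  refine (isCompact_Icc (a := -√a) (b := √a)).of_isClosed_subset
    (isClosed_le (by fun_prop) continuous_const) fun x hx => abs_le.mp (abs_le_sqrt ?_)
  have : 4 * x ^ 2 ≤ a := hx
  nlinarith

end BetaLDP
end

theorem stmt8_general (l : ℕ) (u : ℕ → ℝ) (hu_pos : ∀ n, 0 < u n)
    (hu0 : Tendsto u atTop (𝓝 0)) (hnu : Tendsto (fun n : ℕ => (n : ℝ) * u n) atTop atTop) :
    IsLDP
      (fun n A => betaM (n - l) (n - l)
        ((fun y : I01 => Real.sqrt ((n : ℝ) * u n) * ((y : ℝ) - 1 / 2)) ⁻¹' A))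
      u (fun x : ℝ => ((4 * x ^ 2 : ℝ) : EReal)) ∧
    GoodRate (fun x : ℝ => ((4 * x ^ 2 : ℝ) : EReal)) :=
  ⟨⟨(continuous_coe_real_ereal.comp (by fun_prop)).lowerSemicontinuous, fun A =>
    ⟨BetaLDP.neg_iInf_le_liminf_scaledBetaLaw l hu_pos hu0 hnu A,
      BetaLDP.limsup_scaledBetaLaw_le_neg_iInf l hu_pos hu0 A⟩⟩, BetaLDP.goodRate_four_mul_sq⟩

theorem stmt8 (l : ℕ) (u : ℕ → ℝ) (hu_pos : ∀ n, 0 < u n) (hu_anti : Antitone u)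
    (hu0 : Tendsto u atTop (𝓝 0)) (hnu : Tendsto (fun n : ℕ => (n : ℝ) * u n) atTop atTop) :
    IsLDP
      (fun n A => betaM (n - l) (n - l)
        ((fun y : I01 => Real.sqrt ((n : ℝ) * u n) * ((y : ℝ) - 1 / 2)) ⁻¹' A))
      u (fun x : ℝ => ((4 * x ^ 2 : ℝ) : EReal)) ∧
    GoodRate (fun x : ℝ => ((4 * x ^ 2 : ℝ) : EReal)) :=
  stmt8_general l u hu_pos hu0 hnu
end
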